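/- arXiv:1003.0968 — 6 statements merged into one kernel-verified Lean document; each statement's English description precedes it below -/
import Mathlib

section
/- Let m≥1 be an integer, γ≥0 and δ>0. Then lim_{R→∞}∫_{−R}^{R} exp(−ir²)·(r+γ+iδ)^{−m} dr = exp(i(m−1)π/4)·∫_ℝ exp(−s²)·( s + (γ−δ)/√2 + i(γ+δ)/√2 )^{−m} ds, where the integral on the right converges absolutely. -/
/-!
Write `F z = exp (-i z²) (z + c)⁻ᵐ` with `c = γ + iδ`. For `γ ≥ 0`, `δ > 0` the pole `-c` lies
outside both closed sectors between the real axis and the line `exp (-iπ/4) ℝ`; truncated at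
radius `R`, each sector sits in a disc avoiding the pole, on which `F` has a primitive. Hence the
integrals of `F` along the two bounding rays differ by its integral over the arc `|z| = R`. On that
arc `|exp (-i z²)| = exp (R² sin 2θ) ≤ exp (4R²θ/π)` by Jordan's inequality, so the arcs contribute
`O(1/R)`. Along the rotated line `z = exp (-iπ/4) s` the integrand becomes
`exp (i(m-1)π/4) exp (-s²) (s + exp (iπ/4) c)⁻ᵐ`, which is absolutely integrable.
-/

open Complex MeasureTheory Filter Topology

noncomputable section

open Set intervalIntegral Metric ComplexConjugate
open scoped Real

namespace FresnelContour

variable {f : ℂ → ℂ}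

theorem integral_comp_mul_deriv_eq_sub {G : ℂ → ℂ} {U : Set ℂ} {γ γ' : ℝ → ℂ} {a b : ℝ}
    (hG : ∀ z ∈ U, HasDerivAt G (f z) z) (hf : ContinuousOn f U)
    (hγ : ∀ t, HasDerivAt γ (γ' t) t) (hγ' : Continuous γ') (hγU : MapsTo γ (uIcc a b) U) :
    ∫ t in a..b, f (γ t) * γ' t = G (γ b) - G (γ a) := by
  have hγc : Continuous γ := continuous_iff_continuousAt.2 fun t => (hγ t).continuousAt
  refine integral_eq_sub_of_hasDerivAt (fun t ht => (hG _ (hγU ht)).comp t (hγ t)) ?_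
  exact ((hf.comp hγc.continuousOn hγU).mul hγ'.continuousOn).intervalIntegrable

def arcIntegral (f : ℂ → ℂ) (R θ₁ θ₂ : ℝ) : ℂ :=
  ∫ θ in θ₁..θ₂, f (circleMap 0 R θ) * (circleMap 0 R θ * I)

theorem integral_ray_sub_integral_ray_eq_arcIntegral {q : ℂ} {ρ R θ₁ θ₂ : ℝ}
    (hf : DifferentiableOn ℂ f (ball q ρ)) (hR : 0 ≤ R)
    (hsector : ∀ r ∈ Icc 0 R, ∀ θ ∈ uIcc θ₁ θ₂, circleMap 0 r θ ∈ ball q ρ) :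
    (∫ r in 0..R, f (circleMap 0 r θ₂) * cexp (θ₂ * I)) -
      ∫ r in 0..R, f (circleMap 0 r θ₁) * cexp (θ₁ * I) = arcIntegral f R θ₁ θ₂ := by
  obtain ⟨G, hG⟩ := hf.isExactOn_ball
  have hray : ∀ θ ∈ uIcc θ₁ θ₂,
      ∫ r in 0..R, f (circleMap 0 r θ) * cexp (θ * I) = G (circleMap 0 R θ) - G 0 := by
    intro θ hθ
    have hderiv (r : ℝ) : HasDerivAt (fun r : ℝ => circleMap 0 r θ) (cexp (θ * I)) r := by
      simpa [circleMap_zero] using (hasDerivAt_id r).ofReal_comp.mul_const (cexp (θ * I))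
    have h0 : circleMap 0 0 θ = 0 := by simp [circleMap]
    have h := integral_comp_mul_deriv_eq_sub hG hf.continuousOn hderiv continuous_const
      fun r hr => hsector r (by rwa [uIcc_of_le hR] at hr) θ hθ
    rwa [h0] at h
  rw [hray θ₂ right_mem_uIcc, hray θ₁ left_mem_uIcc, arcIntegral,
    integral_comp_mul_deriv_eq_sub hG hf.continuousOn (hasDerivAt_circleMap 0 R)
      (by fun_prop) fun θ hθ => hsector R ⟨hR, le_rfl⟩ θ hθ]
  ring

/-- The balls `ball (p + t u) (t ‖u‖)` have `p` on their boundary and exhaust the half-plane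
`0 < re ((z - p) * conj u)` as `t → ∞`. -/
theorem exists_ball_forall_mem_of_re_mul_conj_neg {p u : ℂ} (hp : (p * conj u).re < 0) (R : ℝ) :
    ∃ q ρ, p ∉ ball q ρ ∧ ∀ z : ℂ, ‖z‖ ≤ R → 0 ≤ (z * conj u).re → z ∈ ball q ρ := by
  set s := -(p * conj u).re
  have hs : 0 < s := neg_pos.2 hp
  set t := (R + ‖p‖) ^ 2 / s + 1
  have ht : 0 < t := by positivity
  have hts : t * s = (R + ‖p‖) ^ 2 + s := by rw [add_mul, div_mul_cancel₀ _ hs.ne', one_mul]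
  refine ⟨p + t * u, t * ‖u‖, by simp [mem_ball, dist_eq_norm, abs_of_pos ht],
    fun z hz hzu => ?_⟩
  have hnorm : normSq (z - p) ≤ (R + ‖p‖) ^ 2 := by
    rw [normSq_eq_norm_sq]
    exact pow_le_pow_left₀ (norm_nonneg _) ((norm_sub_le z p).trans (by linarith)) 2
  have hre : ((z - p) * conj (t * u)).re = t * ((z * conj u).re + s) := by
    simp only [s, map_mul, conj_ofReal, sub_mul, sub_re, mul_left_comm _ (t : ℂ), re_ofReal_mul]
    ring
  have key : normSq (z - (p + t * u)) < (t * ‖u‖) ^ 2 := by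
    rw [show z - (p + t * u) = (z - p) - t * u by ring, normSq_sub, hre, mul_pow,
      Complex.sq_norm, normSq_mul, normSq_ofReal]
    nlinarith
  rw [mem_ball, dist_eq_norm]
  rw [normSq_eq_norm_sq] at key
  exact lt_of_pow_lt_pow_left₀ 2 (by positivity) key

theorem integral_sub_integral_rotate_eq_arcIntegral {p u : ℂ} {R : ℝ}
    (hf : ∀ z ≠ p, DifferentiableAt ℂ f z) (hp : (p * conj u).re < 0)
    (hu : ∀ θ ∈ Icc (-(π / 4)) 0, 0 ≤ (cexp (θ * I) * conj u).re) (hR : 0 ≤ R) :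
    (∫ r in 0..R, f r) - ∫ r in 0..R, f (r * cexp (-(π / 4) * I)) * cexp (-(π / 4) * I) =
      arcIntegral f R (-(π / 4)) 0 := by
  obtain ⟨q, ρ, hpq, hball⟩ := exists_ball_forall_mem_of_re_mul_conj_neg hp R
  have hdiff : DifferentiableOn ℂ f (ball q ρ) := fun z hz =>
    (hf z (by rintro rfl; exact hpq hz)).differentiableWithinAt
  have hsector : ∀ r ∈ Icc 0 R, ∀ θ ∈ uIcc (-(π / 4)) 0, circleMap 0 r θ ∈ ball q ρ := by
    intro r hr θ hθ
    rw [uIcc_of_le (by linarith [Real.pi_pos])] at hθ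
    refine hball _ ?_ ?_
    · rw [norm_circleMap_zero, abs_of_nonneg hr.1]; exact hr.2
    · rw [circleMap_zero, mul_assoc, Complex.re_ofReal_mul]
      exact mul_nonneg hr.1 (hu θ hθ)
  simpa [circleMap_zero] using integral_ray_sub_integral_ray_eq_arcIntegral hdiff hR hsector

theorem sin_two_mul_le_four_div_pi_mul {θ : ℝ} (hθ : θ ∈ Icc (-(π / 4)) 0) :
    Real.sin (2 * θ) ≤ 4 / π * θ := by
  have h := Real.mul_le_sin (x := -(2 * θ)) (by linarith [hθ.2]) (by linarith [hθ.1])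
  rw [Real.sin_neg] at h
  linarith [show 2 / π * -(2 * θ) = -(4 / π * θ) by ring]

theorem integral_exp_mul_le_inv {a : ℝ} (ha : 0 < a) (b : ℝ) :
    ∫ θ in -b..0, Real.exp (a * θ) ≤ a⁻¹ := by
  rw [integral_comp_mul_left (fun θ => Real.exp θ) ha.ne', integral_exp, mul_zero, Real.exp_zero,
    smul_eq_mul]
  have : 0 < Real.exp (a * -b) := Real.exp_pos _
  nlinarith [inv_pos.2 ha]

theorem norm_exp_neg_I_mul_circleMap_sq (R θ : ℝ) :
    ‖cexp (-I * circleMap 0 R θ ^ 2)‖ = Real.exp (R ^ 2 * Real.sin (2 * θ)) := by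
  rw [Complex.norm_exp, circleMap_zero_pow]
  simp [circleMap_zero_im]

theorem norm_arcIntegral_exp_neg_I_mul_sq_le {k : ℂ → ℂ} {M R : ℝ} (hR : 0 < R)
    (hk : ∀ θ, ‖k (circleMap 0 R θ)‖ ≤ M) :
    ‖arcIntegral (fun z => cexp (-I * z ^ 2) * k z) R (-(π / 4)) 0‖ ≤ π * M / (4 * R) := by
  have hM : 0 ≤ M := (norm_nonneg _).trans (hk 0)
  set a := 4 / π * R ^ 2
  have ha : 0 < a := by positivity
  have hpt : ∀ θ ∈ Ioc (-(π / 4)) 0, ‖cexp (-I * circleMap 0 R θ ^ 2) * k (circleMap 0 R θ) *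
      (circleMap 0 R θ * I)‖ ≤ R * M * Real.exp (a * θ) := by
    intro θ hθ
    have hexp : Real.exp (R ^ 2 * Real.sin (2 * θ)) ≤ Real.exp (a * θ) := by
      refine Real.exp_le_exp.2 ?_
      calc R ^ 2 * Real.sin (2 * θ) ≤ R ^ 2 * (4 / π * θ) := by
            gcongr; exact sin_two_mul_le_four_div_pi_mul (Ioc_subset_Icc_self hθ)
        _ = a * θ := by ring
    rw [norm_mul, norm_mul, norm_mul, norm_exp_neg_I_mul_circleMap_sq, norm_circleMap_zero,
      Complex.norm_I, abs_of_pos hR]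
    calc _ ≤ Real.exp (a * θ) * M * (R * 1) := by gcongr; exact hk θ
      _ = _ := by ring
  calc _ ≤ ∫ θ in -(π / 4)..0, R * M * Real.exp (a * θ) :=
        norm_integral_le_of_norm_le (by linarith [Real.pi_pos]) (ae_of_all _ hpt)
          (by apply Continuous.intervalIntegrable; fun_prop)
    _ ≤ R * M * a⁻¹ := by
        rw [intervalIntegral.integral_const_mul]
        gcongr
        exact integral_exp_mul_le_inv ha _
    _ = π * M / (4 * R) := by simp only [a]; field_simp

theorem tendsto_arcIntegral_exp_neg_I_mul_sq {k : ℂ → ℂ} {M : ℝ}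
    (hk : ∀ᶠ R in atTop, ∀ θ, ‖k (circleMap 0 R θ)‖ ≤ M) :
    Tendsto (fun R => arcIntegral (fun z => cexp (-I * z ^ 2) * k z) R (-(π / 4)) 0) atTop
      (𝓝 0) := by
  refine squeeze_zero_norm' ?_ <|
    (tendsto_const_nhds (x := π * M)).div_atTop (tendsto_id.const_mul_atTop four_pos)
  filter_upwards [hk, eventually_gt_atTop 0] with R hkR hR
  exact norm_arcIntegral_exp_neg_I_mul_sq_le hR hkR

theorem integral_neg_to_self_eq_add_integral_comp_neg {E : Type*} [NormedAddCommGroup E]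
    [NormedSpace ℝ E] {g : ℝ → E} (hg : Continuous g) (R : ℝ) :
    ∫ x in -R..R, g x = (∫ x in 0..R, g x) + ∫ x in 0..R, g (-x) := by
  rw [integral_comp_neg, neg_zero, add_comm,
    integral_add_adjacent_intervals (hg.intervalIntegrable _ _) (hg.intervalIntegrable _ _)]

theorem cos_add_sin_nonneg {θ : ℝ} (hθ : θ ∈ Icc (-(π / 4)) 0) :
    0 ≤ Real.cos θ + Real.sin θ := by
  have h := Real.sin_nonneg_of_nonneg_of_le_pi (x := θ + π / 4) (by linarith [hθ.1])
    (by linarith [hθ.2, Real.pi_pos])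
  rw [Real.sin_add, Real.cos_pi_div_four, Real.sin_pi_div_four] at h
  nlinarith [Real.sqrt_pos.2 (two_pos : (0 : ℝ) < 2)]

theorem exp_pi_div_four_mul_I : cexp (π / 4 * I) = (1 + I) / √2 := by
  have h : (π / 4 : ℂ) = ((π / 4 : ℝ) : ℂ) := by push_cast; ring
  rw [h, Complex.exp_mul_I, ← ofReal_cos, ← ofReal_sin, Real.cos_pi_div_four,
    Real.sin_pi_div_four]
  have h2 : (√2 : ℂ) * √2 = 2 := by exact_mod_cast Real.mul_self_sqrt two_pos.le
  push_cast
  field_simp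
  linear_combination (1 + I) * h2

theorem exp_pi_div_four_mul_I_mul (c : ℂ) :
    cexp (π / 4 * I) * c = ((c.re - c.im) / √2 : ℝ) + I * ((c.re + c.im) / √2 : ℝ) := by
  rw [exp_pi_div_four_mul_I]
  push_cast
  nth_rewrite 1 [← Complex.re_add_im c]
  linear_combination (c.im : ℂ) / √2 * Complex.I_mul_I

theorem im_exp_pi_div_four_mul_I_mul_pos {c : ℂ} (hc : 0 < c.re + c.im) :
    0 < (cexp (π / 4 * I) * c).im := by
  rw [exp_pi_div_four_mul_I_mul]
  simpa using div_pos hc (Real.sqrt_pos.2 two_pos)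

theorem ofReal_add_ne_zero {c : ℂ} (hc : c.im ≠ 0) (s : ℝ) : (s : ℂ) + c ≠ 0 := fun h =>
  hc (by simpa using congrArg Complex.im h)

theorem norm_add_zpow_neg_le_one {z c : ℂ} (h : ‖c‖ + 1 ≤ ‖z‖) (m : ℕ) :
    ‖(z + c) ^ (-(m : ℤ))‖ ≤ 1 := by
  have hzc : 1 ≤ ‖z + c‖ := by
    have := norm_sub_le (z + c) c
    rw [add_sub_cancel_right] at this
    linarith
  rw [norm_zpow, zpow_neg, zpow_natCast]
  exact inv_le_one_of_one_le₀ (one_le_pow₀ hzc)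

theorem continuous_exp_neg_sq_mul_add_zpow {c : ℂ} (hc : 0 < c.im) (m : ℕ) :
    Continuous fun s : ℝ => cexp (-(s : ℂ) ^ 2) * ((s : ℂ) + c) ^ (-(m : ℤ)) :=
  (by fun_prop : Continuous fun s : ℝ => cexp (-(s : ℂ) ^ 2)).mul <|
    (continuous_ofReal.add continuous_const).zpow₀ _ fun s => Or.inl (ofReal_add_ne_zero hc.ne' s)

theorem integrable_exp_neg_sq_mul_add_zpow {c : ℂ} (hc : 0 < c.im) (m : ℕ) :
    Integrable fun s : ℝ => cexp (-(s : ℂ) ^ 2) * ((s : ℂ) + c) ^ (-(m : ℤ)) := by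
  refine ((integrable_exp_neg_mul_sq one_pos).const_mul (c.im ^ (-(m : ℤ)))).mono'
    (continuous_exp_neg_sq_mul_add_zpow hc m).aestronglyMeasurable (ae_of_all _ fun s => ?_)
  have him : c.im ≤ ‖(s : ℂ) + c‖ := by
    simpa using (Complex.abs_im_le_norm ((s : ℂ) + c)).trans' (le_abs_self _)
  rw [norm_mul, norm_zpow, Complex.norm_exp, mul_comm, zpow_neg, zpow_neg, zpow_natCast,
    zpow_natCast]
  gcongr
  simp [← Complex.ofReal_pow]

def fresnelKernel (c : ℂ) (m : ℕ) (z : ℂ) : ℂ := cexp (-I * z ^ 2) * (z + c) ^ (-(m : ℤ))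

theorem differentiableAt_fresnelKernel {c z : ℂ} (m : ℕ) (hz : z ≠ -c) :
    DifferentiableAt ℂ (fresnelKernel c m) z :=
  (by fun_prop : DifferentiableAt ℂ (fun z => cexp (-I * z ^ 2)) z).mul <|
    (differentiableAt_zpow.2 (Or.inl fun h => hz (eq_neg_of_add_eq_zero_left h))).comp z
      (differentiableAt_id.add_const c)

theorem fresnelKernel_mul_exp_neg_pi_div_four_mul_I (c : ℂ) (m : ℕ) (s : ℂ) :
    fresnelKernel c m (s * cexp (-(π / 4) * I)) * cexp (-(π / 4) * I) =
      cexp (I * (m - 1) * π / 4) * (cexp (-s ^ 2) * (s + cexp (π / 4 * I) * c) ^ (-(m : ℤ))) := by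
  set ω := cexp (-(π / 4) * I)
  have hω : ω * cexp (π / 4 * I) = 1 := by rw [← Complex.exp_add]; ring_nf; exact Complex.exp_zero
  have hω0 : ω ≠ 0 := Complex.exp_ne_zero _
  have hsq : ω ^ 2 = -I := by
    rw [← Complex.exp_nat_mul, ← exp_neg_pi_div_two_mul_I]; congr 1; push_cast; ring
  have hpow : ω ^ (-(m : ℤ)) * ω = cexp (I * (m - 1) * π / 4) := by
    rw [← zpow_add_one₀ hω0, ← Complex.exp_int_mul]; congr 1; push_cast; ring
  have harg : s * ω + c = ω * (s + cexp (π / 4 * I) * c) := by linear_combination c * hω.symm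
  have hexp : -I * (s ^ 2 * -I) = -s ^ 2 := by linear_combination s ^ 2 * Complex.I_mul_I
  rw [fresnelKernel, harg, mul_zpow, ← hpow, mul_pow, hsq, hexp]
  ring

theorem integral_fresnelKernel_sub_integral_rotate {c : ℂ} (hc₁ : 0 < c.re + c.im)
    (hc₂ : 0 < c.im) (m : ℕ) {R : ℝ} (hR : 0 ≤ R) :
    (∫ r in -R..R, fresnelKernel c m r) -
        ∫ s in -R..R, fresnelKernel c m (s * cexp (-(π / 4) * I)) * cexp (-(π / 4) * I) =
      arcIntegral (fresnelKernel c m) R (-(π / 4)) 0 +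
        arcIntegral (fun z => fresnelKernel c m (-z)) R (-(π / 4)) 0 := by
  have hrot_im := im_exp_pi_div_four_mul_I_mul_pos hc₁
  have hline : Continuous fun r : ℝ => fresnelKernel c m r :=
    continuous_iff_continuousAt.2 fun r => (differentiableAt_fresnelKernel m
      (fun h => ofReal_add_ne_zero hc₂.ne' r (by rw [h, neg_add_cancel]))).continuousAt.comp
      continuous_ofReal.continuousAt
  have hrot : Continuous fun s : ℝ =>
      fresnelKernel c m (s * cexp (-(π / 4) * I)) * cexp (-(π / 4) * I) := by
    simp_rw [fresnelKernel_mul_exp_neg_pi_div_four_mul_I]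
    exact continuous_const.mul (continuous_exp_neg_sq_mul_add_zpow hrot_im m)
  -- The sector below the positive axis avoids `-c`; reflecting, the half-line `r ≤ 0` is the same
  -- sector for `z ↦ F (-z)`, whose pole `c` lies above the real axis.
  have hright := integral_sub_integral_rotate_eq_arcIntegral (p := -c) (u := 1 + I)
    (fun z hz => differentiableAt_fresnelKernel m hz) (by simp; linarith)
    (fun θ hθ => by simpa using cos_add_sin_nonneg hθ) hR
  have hleft := integral_sub_integral_rotate_eq_arcIntegral (p := c) (u := -I)
    (f := fun z => fresnelKernel c m (-z))
    (fun z hz => (differentiableAt_fresnelKernel m (neg_injective.ne hz)).comp z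
      differentiableAt_id.neg)
    (by simpa using hc₂)
    (fun θ hθ => by
      simpa using Real.sin_nonpos_of_nonpos_of_neg_pi_le hθ.2 (by linarith [hθ.1, Real.pi_pos]))
    hR
  rw [integral_neg_to_self_eq_add_integral_comp_neg hline,
    integral_neg_to_self_eq_add_integral_comp_neg hrot]
  simp only [ofReal_neg, neg_mul] at hleft hright ⊢
  linear_combination hright + hleft

theorem tendsto_integral_fresnelKernel {c : ℂ} (hc₁ : 0 < c.re + c.im) (hc₂ : 0 < c.im)
    (m : ℕ) :
    Tendsto (fun R : ℝ => ∫ r in -R..R, fresnelKernel c m r) atTop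
      (𝓝 (cexp (I * (m - 1) * π / 4) *
        ∫ s : ℝ, cexp (-(s : ℂ) ^ 2) * (s + cexp (π / 4 * I) * c) ^ (-(m : ℤ)))) := by
  have hrotated (R : ℝ) :
      ∫ s in -R..R, fresnelKernel c m (s * cexp (-(π / 4) * I)) * cexp (-(π / 4) * I) =
        cexp (I * (m - 1) * π / 4) *
          ∫ s in -R..R, cexp (-(s : ℂ) ^ 2) * (s + cexp (π / 4 * I) * c) ^ (-(m : ℤ)) := by
    simp_rw [fresnelKernel_mul_exp_neg_pi_div_four_mul_I, intervalIntegral.integral_const_mul]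
  have hlarge : ∀ᶠ R in atTop, ∀ θ, ‖c‖ + 1 ≤ ‖circleMap 0 R θ‖ := by
    filter_upwards [eventually_ge_atTop (‖c‖ + 1)] with R hR θ
    rw [norm_circleMap_zero]
    exact hR.trans (le_abs_self R)
  have hright := tendsto_arcIntegral_exp_neg_I_mul_sq (k := fun z => (z + c) ^ (-(m : ℤ)))
    (hlarge.mono fun R h θ => norm_add_zpow_neg_le_one (h θ) m)
  have hleft := tendsto_arcIntegral_exp_neg_I_mul_sq (k := fun z => (-z + c) ^ (-(m : ℤ)))
    (hlarge.mono fun R h θ => norm_add_zpow_neg_le_one (by rw [norm_neg]; exact h θ) m)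
  have hneg : (fun z => fresnelKernel c m (-z)) =
      fun z => cexp (-I * z ^ 2) * (-z + c) ^ (-(m : ℤ)) := by
    funext z
    simp [fresnelKernel]
  have hlim := ((intervalIntegral_tendsto_integral (integrable_exp_neg_sq_mul_add_zpow
    (im_exp_pi_div_four_mul_I_mul_pos hc₁) m) tendsto_neg_atTop_atBot tendsto_id).const_mul
      (cexp (I * (m - 1) * π / 4))).add (hright.add hleft)
  rw [add_zero, add_zero] at hlim
  refine hlim.congr' ?_
  filter_upwards [eventually_ge_atTop 0] with R hR
  have := integral_fresnelKernel_sub_integral_rotate hc₁ hc₂ m hR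
  rw [hrotated, hneg] at this
  rw [sub_eq_iff_eq_add'.1 this]
  rfl

end FresnelContour

open FresnelContour

theorem stmt7_general (m : ℕ) (γ δ : ℝ) (hγ : 0 ≤ γ) (hδ : 0 < δ) :
    Integrable (fun s : ℝ => Complex.exp (-(s : ℂ) ^ 2) *
        ((s : ℂ) + ((γ - δ) / Real.sqrt 2 : ℝ) + I * ((γ + δ) / Real.sqrt 2 : ℝ)) ^ (-(m : ℤ))) ∧
    Tendsto (fun R : ℝ => ∫ r in (-R)..R,
        Complex.exp (-I * (r : ℂ) ^ 2) * ((r : ℂ) + γ + I * δ) ^ (-(m : ℤ))) atTop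
      (𝓝 (Complex.exp (I * ((m : ℂ) - 1) * Real.pi / 4) *
        ∫ s : ℝ, Complex.exp (-(s : ℂ) ^ 2) *
          ((s : ℂ) + ((γ - δ) / Real.sqrt 2 : ℝ) + I * ((γ + δ) / Real.sqrt 2 : ℝ))
            ^ (-(m : ℤ)))) := by
  set c : ℂ := γ + I * δ
  have hc₁ : 0 < c.re + c.im := by simp [c]; linarith
  have hc₂ : 0 < c.im := by simpa [c] using hδ
  have hrot : cexp (π / 4 * I) * c = ((γ - δ) / √2 : ℝ) + I * ((γ + δ) / √2 : ℝ) := by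
    simpa [c] using exp_pi_div_four_mul_I_mul c
  simp only [add_assoc, ← hrot]
  exact ⟨integrable_exp_neg_sq_mul_add_zpow (im_exp_pi_div_four_mul_I_mul_pos hc₁) m,
    tendsto_integral_fresnelKernel hc₁ hc₂ m⟩

/-- for an integer `m≥1`, `γ≥0` and `δ>0`,
`lim_{R→∞}∫_{−R}^{R} exp(−ir²)·(r+γ+iδ)^{−m} dr
  = exp(i(m−1)π/4)·∫_ℝ exp(−s²)·(s+(γ−δ)/√2+i(γ+δ)/√2)^{−m} ds`,
the right-hand integral converging absolutely. -/
theorem stmt7 (m : ℕ) (hm : 1 ≤ m) (γ δ : ℝ) (hγ : 0 ≤ γ) (hδ : 0 < δ) :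
    Integrable (fun s : ℝ => Complex.exp (-(s : ℂ) ^ 2) *
        ((s : ℂ) + ((γ - δ) / Real.sqrt 2 : ℝ) + I * ((γ + δ) / Real.sqrt 2 : ℝ)) ^ (-(m : ℤ))) ∧
    Tendsto (fun R : ℝ => ∫ r in (-R)..R,
        Complex.exp (-I * (r : ℂ) ^ 2) * ((r : ℂ) + γ + I * δ) ^ (-(m : ℤ))) atTop
      (𝓝 (Complex.exp (I * ((m : ℂ) - 1) * Real.pi / 4) *
        ∫ s : ℝ, Complex.exp (-(s : ℂ) ^ 2) *
          ((s : ℂ) + ((γ - δ) / Real.sqrt 2 : ℝ) + I * ((γ + δ) / Real.sqrt 2 : ℝ))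
            ^ (-(m : ℤ)))) :=
  stmt7_general m γ δ hγ hδ
end
end

section
/- Let a>0 and α∈ℝ∖{0} with aα≠−1. Then there exist δ>0 and c>0 such that for every k∈ℂ with |Im k| ≤ δ one has |(2k+iα)² + α²·exp(4ika)| ≥ c·|k|. In particular, D(k)=(2k+iα)²+α²·exp(4ika) has no zeros in the strip {|Im k| ≤ δ} other than k=0, where its zero is simple with derivative 4iα(1+aα) ≠ 0. -/
/-!
Write `D(k) = k • g(k)` with `g = dslope D 0`, which is continuous with
`g(0) = D'(0) = 4iα(1+aα) ≠ 0`. For real `x ≠ 0` we have `|(2x+iα)²| = 4x²+α² > α² = |α² e^{4ixa}|`,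
so `g` has no zero on the real axis; by compactness `|g|` is then bounded below on a thin closed
neighbourhood of any real segment `[-R, R]`. For `|k| ≥ R` with `R` large the quadratic term wins:
in the strip `|Im k| ≤ 1`, `|D(k)| ≥ |k|² - α² e^{4|a|} ≥ |k|`.
-/

open Complex MeasureTheory Filter Topology
open scoped ENNReal

noncomputable section

/-- `L1(x,y;k) = −α(2k+iα)·exp(ik|x+a|)·exp(ik|y+a|)`. -/
def L1 (a α x y : ℝ) (k : ℂ) : ℂ :=
  -(α : ℂ) * (2 * k + I * α) * Complex.exp (I * k * (|x + a| : ℝ)) *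
    Complex.exp (I * k * (|y + a| : ℝ))

/-- `L2(x,y;k) = iα²·exp(2ika)·exp(ik|x+a|)·exp(ik|y−a|)`. -/
def L2 (a α x y : ℝ) (k : ℂ) : ℂ :=
  I * (α : ℂ) ^ 2 * Complex.exp (2 * I * k * a) * Complex.exp (I * k * (|x + a| : ℝ)) *
    Complex.exp (I * k * (|y - a| : ℝ))

/-- `f(x,y;k) = L1 + L2 + L3 + L4`, with `L3(x,y;k)=L2(−x,−y;k)` and `L4(x,y;k)=L1(−x,−y;k)`. -/
def fker (a α x y : ℝ) (k : ℂ) : ℂ :=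
  L1 a α x y k + L2 a α x y k + L2 a α (-x) (-y) k + L1 a α (-x) (-y) k

/-- `D(k) = (2k+iα)² + α²·exp(4ika)`. -/
def Dden (a α : ℝ) (k : ℂ) : ℂ :=
  (2 * k + I * α) ^ 2 + (α : ℂ) ^ 2 * Complex.exp (4 * I * k * a)

/-- `U0(t;x,y) = (4πit)^{−1/2}·exp(i|x−y|²/(4t))`, principal branch. -/
def U0 (t x y : ℝ) : ℂ :=
  (4 * Real.pi * I * t : ℂ) ^ (-(1 / 2 : ℂ)) * Complex.exp (I * (|x - y| : ℝ) ^ 2 / (4 * t))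

theorem IsCompact.exists_pos_le_norm_on_cthickening {X E : Type*} [PseudoMetricSpace X]
    [ProperSpace X] [NormedAddCommGroup E] {K : Set X} (hK : IsCompact K) {g : X → E}
    (hg : Continuous g) (hne : ∀ x ∈ K, g x ≠ 0) :
    ∃ δ > 0, ∃ c > 0, ∀ z ∈ Metric.cthickening δ K, c ≤ ‖g z‖ := by
  obtain ⟨δ, hδ, hsub⟩ :=
    hK.exists_cthickening_subset_open (isOpen_ne_fun hg continuous_const) hne
  obtain ⟨c, hc, hbound⟩ := hK.cthickening.exists_forall_le' hg.norm.continuousOn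
    fun z hz ↦ norm_pos_iff.mpr (hsub hz)
  exact ⟨δ, hδ, c, hc, hbound⟩

theorem Complex.mem_cthickening_ofReal_Icc {k : ℂ} {δ R : ℝ} (hk : |k.im| ≤ δ) (hR : ‖k‖ ≤ R) :
    k ∈ Metric.cthickening δ (ofReal '' Set.Icc (-R) R) := by
  refine Metric.mem_cthickening_of_dist_le k k.re δ _
    ⟨k.re, abs_le.mp ((abs_re_le_norm k).trans hR), rfl⟩ ?_
  rwa [dist_of_re_eq (ofReal_re _).symm, ofReal_im, Real.dist_0_eq_abs]

theorem exists_mul_norm_le_norm_on_strip {E : Type*} [NormedAddCommGroup E] [NormedSpace ℂ E]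
    {f : ℂ → E} {f' : E} (hf : Continuous f) (h0 : f 0 = 0) (hd : HasDerivAt f f' 0)
    (hf' : f' ≠ 0) (hreal : ∀ x : ℝ, x ≠ 0 → f x ≠ 0) (R : ℝ) :
    ∃ δ > 0, ∃ c > 0, ∀ k : ℂ, |k.im| ≤ δ → ‖k‖ ≤ R → c * ‖k‖ ≤ ‖f k‖ := by
  have hslope : Continuous (dslope f 0) := continuousOn_univ.mp <|
    (continuousOn_dslope Filter.univ_mem).mpr ⟨hf.continuousOn, hd.differentiableAt⟩
  have hslope_ne : ∀ z ∈ ofReal '' Set.Icc (-R) R, dslope f 0 z ≠ 0 := by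
    rintro _ ⟨x, -, rfl⟩
    rcases eq_or_ne x 0 with rfl | hx
    · rwa [ofReal_zero, dslope_same, hd.deriv]
    · have hx' : (x : ℂ) ≠ 0 := ofReal_ne_zero.mpr hx
      rw [dslope_of_ne _ hx', slope_def_module, h0, sub_zero, sub_zero]
      exact smul_ne_zero (inv_ne_zero hx') (hreal x hx)
  obtain ⟨δ, hδ, c, hc, hbound⟩ := (isCompact_Icc.image continuous_ofReal)
    |>.exists_pos_le_norm_on_cthickening hslope hslope_ne
  refine ⟨δ, hδ, c, hc, fun k hk hkR ↦ ?_⟩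
  have hfk : f k = k • dslope f 0 k := by simpa [h0] using (sub_smul_dslope f 0 k).symm
  rw [hfk, norm_smul, mul_comm]
  exact mul_le_mul_of_nonneg_left (hbound k (mem_cthickening_ofReal_Icc hk hkR))
    (norm_nonneg k)

section Dden

variable (a α : ℝ)

theorem Dden_zero : Dden a α 0 = 0 := by
  simp only [Dden, mul_zero, zero_mul, exp_zero, mul_one, zero_add, mul_pow, I_sq]
  ring

theorem continuous_Dden : Continuous (Dden a α) := by
  unfold Dden; fun_prop

theorem hasDerivAt_Dden_zero :
    HasDerivAt (Dden a α) (4 * I * α * (1 + a * α)) 0 := by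
  have h : HasDerivAt (fun k : ℂ ↦ (2 * k + I * α) ^ 2 + (α : ℂ) ^ 2 * cexp (4 * I * k * a)) _ 0 :=
    ((((hasDerivAt_id' 0).const_mul 2).add_const _).fun_pow 2).add
      (((((hasDerivAt_id' 0).const_mul _).mul_const _).cexp).const_mul _)
  refine h.congr_deriv ?_
  simp only [mul_zero, zero_mul, zero_add, exp_zero, mul_one, one_mul]
  ring

theorem norm_exp_four_I_mul (k : ℂ) :
    ‖cexp (4 * I * k * a)‖ = Real.exp (-(4 * a * k.im)) := by
  rw [norm_exp, show 4 * I * k * a = I * ((4 * a : ℝ) * k) by push_cast; ring,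
    I_mul_re, im_ofReal_mul]

variable {a α}

theorem Dden_ofReal_ne_zero {x : ℝ} (hx : x ≠ 0) : Dden a α x ≠ 0 := by
  intro hD
  have hsq : (2 * (x : ℂ) + I * α) ^ 2 = -((α : ℂ) ^ 2 * cexp (4 * I * x * a)) := by
    rw [Dden] at hD; linear_combination hD
  have hnorm := congrArg norm hsq
  rw [norm_neg, norm_mul, norm_exp_four_I_mul, ofReal_im, mul_zero, neg_zero, Real.exp_zero,
    mul_one, norm_pow, norm_pow, norm_real, Real.norm_eq_abs, sq_abs] at hnorm
  have : ‖2 * (x : ℂ) + I * α‖ ^ 2 = 4 * x ^ 2 + α ^ 2 := by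
    rw [show 2 * (x : ℂ) + I * α = (2 * x : ℝ) + α * I by push_cast; ring, Complex.sq_norm,
      normSq_add_mul_I]
    ring
  have : 0 < x ^ 2 := by positivity
  linarith

theorem norm_le_norm_Dden {k : ℂ} (hk : |k.im| ≤ 1)
    (hR : |α| + α ^ 2 * Real.exp (4 * |a|) + 1 ≤ ‖k‖) : ‖k‖ ≤ ‖Dden a α k‖ := by
  set C := α ^ 2 * Real.exp (4 * |a|)
  have hC : 0 ≤ C := by positivity
  have hlin : ‖k‖ ≤ ‖2 * k + I * α‖ := by
    have := norm_sub_le (2 * k + I * α) (I * α)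
    simp only [add_sub_cancel_right, norm_mul, norm_I, norm_real, Real.norm_eq_abs, one_mul,
      norm_ofNat] at this
    linarith
  have hexp : ‖(α : ℂ) ^ 2 * cexp (4 * I * k * a)‖ ≤ C := by
    rw [norm_mul, norm_exp_four_I_mul, norm_pow, norm_real, Real.norm_eq_abs, sq_abs]
    refine mul_le_mul_of_nonneg_left (Real.exp_le_exp.mpr ?_) (sq_nonneg α)
    nlinarith [neg_abs_le (a * k.im), abs_mul a k.im, abs_nonneg a, abs_nonneg k.im]
  have hquad : ‖k‖ ^ 2 - C ≤ ‖Dden a α k‖ := by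
    have := norm_sub_norm_le ((2 * k + I * α) ^ 2) (-((α : ℂ) ^ 2 * cexp (4 * I * k * a)))
    rw [sub_neg_eq_add, norm_neg, norm_pow] at this
    have : ‖k‖ ^ 2 ≤ ‖2 * k + I * α‖ ^ 2 := by gcongr
    unfold Dden
    linarith
  nlinarith [abs_nonneg α]

end Dden

theorem stmt10_general (a α : ℝ) (hα : α ≠ 0) (haα : a * α ≠ -1) :
    ∃ δ > 0, ∃ c > 0,
      (∀ k : ℂ, |k.im| ≤ δ → c * ‖k‖ ≤ ‖Dden a α k‖) ∧
      (∀ k : ℂ, |k.im| ≤ δ → Dden a α k = 0 → k = 0) ∧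
      Dden a α 0 = 0 ∧
      HasDerivAt (Dden a α) (4 * I * (α : ℂ) * (1 + (a : ℂ) * (α : ℂ))) 0 ∧
      4 * I * (α : ℂ) * (1 + (a : ℂ) * (α : ℂ)) ≠ 0 := by
  have hderiv_ne : 4 * I * (α : ℂ) * (1 + (a : ℂ) * (α : ℂ)) ≠ 0 := by
    have : (1 : ℂ) + a * α ≠ 0 := by
      exact_mod_cast fun h ↦ haα (by linarith : a * α = -1)
    simp [I_ne_zero, hα, this]
  set R := |α| + α ^ 2 * Real.exp (4 * |a|) + 1
  obtain ⟨δ, hδ, c, hc, hsmall⟩ := exists_mul_norm_le_norm_on_strip (continuous_Dden a α)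
    (Dden_zero a α) (hasDerivAt_Dden_zero a α) hderiv_ne (fun _ ↦ Dden_ofReal_ne_zero) R
  have hbound : ∀ k : ℂ, |k.im| ≤ min δ 1 → min c 1 * ‖k‖ ≤ ‖Dden a α k‖ := by
    intro k hk
    rcases le_total ‖k‖ R with hkR | hkR
    · exact (mul_le_mul_of_nonneg_right (min_le_left _ _) (norm_nonneg k)).trans
        (hsmall k (hk.trans (min_le_left _ _)) hkR)
    · exact (mul_le_of_le_one_left (norm_nonneg k) (min_le_right _ _)).trans
        (norm_le_norm_Dden (hk.trans (min_le_right _ _)) hkR)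
  refine ⟨min δ 1, lt_min hδ one_pos, min c 1, lt_min hc one_pos, hbound, fun k hk hk0 ↦ ?_,
    Dden_zero a α, hasDerivAt_Dden_zero a α, hderiv_ne⟩
  have := hbound k hk
  rw [hk0, norm_zero] at this
  exact norm_le_zero_iff.mp (nonpos_of_mul_nonpos_right this (lt_min hc one_pos))

/-- for `a>0`, `α≠0`, `aα≠−1` there exist `δ>0`, `c>0` with
`|D(k)| ≥ c|k|` in the strip `|Im k| ≤ δ`; in particular `D` has no zero in the strip
other than `k=0`, which is simple with `D'(0) = 4iα(1+aα) ≠ 0`. -/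
theorem stmt10 (a α : ℝ) (ha : 0 < a) (hα : α ≠ 0) (haα : a * α ≠ -1) :
    ∃ δ > 0, ∃ c > 0,
      (∀ k : ℂ, |k.im| ≤ δ → c * ‖k‖ ≤ ‖Dden a α k‖) ∧
      (∀ k : ℂ, |k.im| ≤ δ → Dden a α k = 0 → k = 0) ∧
      Dden a α 0 = 0 ∧
      HasDerivAt (Dden a α) (4 * I * (α : ℂ) * (1 + (a : ℂ) * (α : ℂ))) 0 ∧
      4 * I * (α : ℂ) * (1 + (a : ℂ) * (α : ℂ)) ≠ 0 :=
  stmt10_general a α hα haα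
end
end

section
/- Let a>0, α>0 and p∈[2,∞]. For λ>0 define the operator R_λ on L^p(ℝ) by (R_λ u)(x) = λ²·∫_ℝ K(x,y;iλ)·u(y) dy. Then there exists a constant C>0, independent of λ, such that ‖R_λ u‖_{L^p} ≤ C·‖u‖_{L^p} for all λ>0 and all u∈L^p(ℝ). -/
open Complex MeasureTheory Filter Topology
open scoped ENNReal

noncomputable section

/-- `K0(x,y;k) = (i/2k)·exp(ik|x−y|)`. -/
def K0 (x y : ℝ) (k : ℂ) : ℂ := I / (2 * k) * Complex.exp (I * k * (|x - y| : ℝ))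

/-- The resolvent kernel `K(x,y;k) = K0(x,y;k) − (L1+L2+L3+L4)(x,y;k)/(2k·D(k))`. -/
def Kker (a α x y : ℝ) (k : ℂ) : ℂ :=
  K0 x y k - fker a α x y k / (2 * k * Dden a α k)

/-!
At `k = iλ` every exponential in the kernel is a real decaying exponential, and
`λ² |K(x,y;iλ)| ≤ (1 + aα) λ e^{-λ|x-y|}`. The delicate regime is small `λ`: the denominator only
satisfies `|D(iλ)| ≥ 4λα`, so the numerator has to be `O(λ)` as well. It is, because the `O(α²)`
parts of `L1` and `L2` cancel: `L1 + L2 = iα e^{-λ|x+a|} (α e^{-λ(2a+|y-a|)} - (2λ+α) e^{-λ|y+a|})`,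
and the two exponents differ by at most `4a`. Hence `R_λ` is dominated by convolution with a kernel
of `L¹` mass at most `2(1 + aα)`, and Young's inequality `‖f ⋆ g‖_p ≤ ‖f‖_p ‖g‖_1` concludes.
-/

namespace MeasureTheory

section Jensen

variable {α : Type*} [MeasurableSpace α] {μ : Measure α}

lemma lintegral_mul_rpow_le {q : ℝ} (hq : 1 ≤ q) {f w : α → ℝ≥0∞}
    (hf : AEMeasurable f μ) (hw : AEMeasurable w μ) :
    (∫⁻ y, f y * w y ∂μ) ^ q ≤ (∫⁻ y, w y ∂μ) ^ (q - 1) * ∫⁻ y, f y ^ q * w y ∂μ := by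
  have hq0 : 0 < q := by linarith
  have hq1 : 0 ≤ 1 - q⁻¹ := by simp [inv_le_one_of_one_le₀ hq]
  have hholder := ENNReal.lintegral_mul_norm_pow_le (μ := μ) hw ((hf.pow_const q).mul hw)
    hq1 (inv_nonneg.2 hq0.le) (sub_add_cancel 1 q⁻¹)
  have hsplit : ∀ y, w y ^ (1 - q⁻¹) * (f y ^ q * w y) ^ q⁻¹ = f y * w y := fun y => by
    rw [ENNReal.mul_rpow_of_nonneg _ _ (by positivity), ← ENNReal.rpow_mul,
      mul_inv_cancel₀ hq0.ne', ENNReal.rpow_one, mul_left_comm,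
      ← ENNReal.rpow_add_of_nonneg _ _ hq1 (by positivity), sub_add_cancel, ENNReal.rpow_one]
  simp only [Pi.mul_apply, hsplit] at hholder
  calc (∫⁻ y, f y * w y ∂μ) ^ q
      ≤ ((∫⁻ y, w y ∂μ) ^ (1 - q⁻¹) * (∫⁻ y, f y ^ q * w y ∂μ) ^ q⁻¹) ^ q :=
        ENNReal.rpow_le_rpow hholder hq0.le
    _ = (∫⁻ y, w y ∂μ) ^ (q - 1) * ∫⁻ y, f y ^ q * w y ∂μ := by
        rw [ENNReal.mul_rpow_of_nonneg _ _ hq0.le, ← ENNReal.rpow_mul, ← ENNReal.rpow_mul,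
          inv_mul_cancel₀ hq0.ne', ENNReal.rpow_one, sub_mul, one_mul, inv_mul_cancel₀ hq0.ne']

end Jensen

section Young

variable {G : Type*} [MeasurableSpace G] [AddCommGroup G] [MeasurableAdd₂ G] [MeasurableNeg G]
  {μ : Measure G} [SFinite μ] [μ.IsAddLeftInvariant] [μ.IsNegInvariant]

lemma lintegral_lconvolution_rpow_le {q : ℝ} (hq : 1 ≤ q) {f g : G → ℝ≥0∞}
    (hf : AEMeasurable f μ) (hg : Measurable g) :
    ∫⁻ x, (f ⋆ₗ[μ] g) x ^ q ∂μ ≤ (∫⁻ x, g x ∂μ) ^ q * ∫⁻ x, f x ^ q ∂μ := by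
  set M := ∫⁻ x, g x ∂μ
  have hM : ∀ x, ∫⁻ y, g (x - y) ∂μ = M := lintegral_sub_left_eq_self g
  have hmeas : AEMeasurable (Function.uncurry fun x y => f y ^ q * g (x - y)) (μ.prod μ) :=
    (hf.pow_const q).comp_snd.mul (hg.comp measurable_sub).aemeasurable
  calc ∫⁻ x, (f ⋆ₗ[μ] g) x ^ q ∂μ
      ≤ ∫⁻ x, M ^ (q - 1) * ∫⁻ y, f y ^ q * g (x - y) ∂μ ∂μ := by
        refine lintegral_mono fun x => ?_
        simp only [lconvolution_def, neg_add_eq_sub, ← hM x]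
        exact lintegral_mul_rpow_le hq hf
          (hg.comp (measurable_const.sub measurable_id)).aemeasurable
    _ = M ^ (q - 1) * ∫⁻ y, ∫⁻ x, f y ^ q * g (x - y) ∂μ ∂μ := by
        rw [lintegral_const_mul'' _ hmeas.lintegral_prod_right, lintegral_lintegral_swap hmeas]
    _ = M ^ (q - 1) * ∫⁻ y, f y ^ q * M ∂μ := by
        congr 1
        refine lintegral_congr fun y => ?_
        rw [lintegral_const_mul _ (show Measurable fun x => g (x - y) by fun_prop),
          lintegral_sub_right_eq_self g y]
    _ = M ^ q * ∫⁻ x, f x ^ q ∂μ := by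
        rw [lintegral_mul_const'' _ (hf.pow_const q), ← mul_assoc, mul_comm _ M, ← mul_assoc]
        congr 1
        conv_rhs => rw [← sub_add_cancel q 1]
        rw [ENNReal.rpow_add_of_nonneg _ _ (sub_nonneg.2 hq) zero_le_one, ENNReal.rpow_one,
          mul_comm]

lemma eLpNorm_le_of_enorm_le_lconvolution {E E' : Type*} [NormedAddCommGroup E]
    [NormedAddCommGroup E'] {p : ℝ≥0∞} (hp : 1 ≤ p) {F : G → E} {u : G → E'} {g : G → ℝ≥0∞}
    (hu : AEStronglyMeasurable u μ) (hg : Measurable g)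
    (hF : ∀ᵐ x ∂μ, ‖F x‖ₑ ≤ ((fun y => ‖u y‖ₑ) ⋆ₗ[μ] g) x) :
    eLpNorm F p μ ≤ (∫⁻ x, g x ∂μ) * eLpNorm u p μ := by
  have hp0 : p ≠ 0 := (zero_lt_one.trans_le hp).ne'
  rcases eq_or_ne p ∞ with rfl | hp_top
  · simp only [eLpNorm_exponent_top]
    refine essSup_le_of_ae_le _ ?_
    filter_upwards [hF] with x hx
    refine hx.trans ?_
    calc ((fun y => ‖u y‖ₑ) ⋆ₗ[μ] g) x
        ≤ ∫⁻ y, eLpNormEssSup u μ * g (x - y) ∂μ := by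
          refine lintegral_mono_ae ?_
          filter_upwards [ae_le_eLpNormEssSup (f := u) (μ := μ)] with y hy
          rw [neg_add_eq_sub]
          gcongr
      _ = (∫⁻ x, g x ∂μ) * eLpNormEssSup u μ := by
          rw [lintegral_const_mul _ (show Measurable fun y => g (x - y) by fun_prop),
            lintegral_sub_left_eq_self g x, mul_comm]
  · have hq : 1 ≤ p.toReal := by
      simpa using (ENNReal.toReal_le_toReal ENNReal.one_ne_top hp_top).2 hp
    have hq0 : 0 < p.toReal := by linarith
    rw [eLpNorm_eq_lintegral_rpow_enorm_toReal hp0 hp_top,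
      eLpNorm_eq_lintegral_rpow_enorm_toReal hp0 hp_top]
    calc (∫⁻ x, ‖F x‖ₑ ^ p.toReal ∂μ) ^ (1 / p.toReal)
        ≤ ((∫⁻ x, g x ∂μ) ^ p.toReal * ∫⁻ x, ‖u x‖ₑ ^ p.toReal ∂μ) ^ (1 / p.toReal) := by
          refine ENNReal.rpow_le_rpow ?_ (by positivity)
          refine le_trans (lintegral_mono_ae ?_) (lintegral_lconvolution_rpow_le hq hu.enorm hg)
          filter_upwards [hF] with x hx
          gcongr
      _ = (∫⁻ x, g x ∂μ) * (∫⁻ x, ‖u x‖ₑ ^ p.toReal ∂μ) ^ (1 / p.toReal) := by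
          rw [ENNReal.mul_rpow_of_nonneg _ _ (by positivity), ← ENNReal.rpow_mul,
            mul_one_div_cancel hq0.ne', ENNReal.rpow_one]

end Young

end MeasureTheory

open ProbabilityTheory in
lemma lintegral_exp_neg_mul_abs_le {r : ℝ} (hr : 0 < r) :
    ∫⁻ z, ENNReal.ofReal (r * Real.exp (-(r * |z|))) ≤ 2 := by
  have hpdf : ∀ z : ℝ, ENNReal.ofReal (r * Real.exp (-(r * |z|))) ≤
      exponentialPDF r z + exponentialPDF r (-z) := fun z => by
    rcases le_or_gt 0 z with hz | hz
    · rw [exponentialPDF_of_nonneg hz, abs_of_nonneg hz]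
      exact le_self_add
    · rw [exponentialPDF_of_nonneg (neg_nonneg.2 hz.le), abs_of_neg hz]
      exact le_add_self
  calc ∫⁻ z, ENNReal.ofReal (r * Real.exp (-(r * |z|)))
      ≤ ∫⁻ z, (exponentialPDF r z + exponentialPDF r (-z)) := lintegral_mono hpdf
    _ = 2 := by
        rw [lintegral_add_left (f := exponentialPDF r)
            (measurable_exponentialPDFReal r).ennreal_ofReal,
          lintegral_neg_eq_self (exponentialPDF r), lintegral_exponentialPDF_eq_one hr,
          one_add_one_eq_two]

lemma exp_I_mul_I_mul_ofReal (μ r : ℝ) :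
    Complex.exp (I * (I * μ) * r) = (Real.exp (-(μ * r)) : ℂ) := by
  rw [← mul_assoc, I_mul_I, Complex.ofReal_exp]
  push_cast
  ring_nf

lemma abs_mul_exp_sub_mul_exp_le {α μ s t d : ℝ} (hα : 0 ≤ α) (hμ : 0 ≤ μ) (hts : t ≤ s)
    (hsd : s ≤ t + d) :
    |α * Real.exp (-(μ * s)) - (2 * μ + α) * Real.exp (-(μ * t))| ≤
      (2 * μ + α * μ * d) * Real.exp (-(μ * t)) := by
  set E := Real.exp (-(μ * (s - t)))
  have hE_le : E ≤ 1 := Real.exp_le_one_iff.2 (by nlinarith)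
  have hE_ge : 1 - μ * d ≤ E := by
    have := Real.add_one_le_exp (-(μ * (s - t)))
    nlinarith
  have hsplit : α * Real.exp (-(μ * s)) - (2 * μ + α) * Real.exp (-(μ * t)) =
      (α * (E - 1) - 2 * μ) * Real.exp (-(μ * t)) := by
    rw [show -(μ * s) = -(μ * (s - t)) + -(μ * t) by ring, Real.exp_add]
    ring
  rw [hsplit, abs_mul, abs_of_pos (Real.exp_pos _)]
  gcongr
  rw [abs_le]
  constructor <;> nlinarith

lemma L1_add_L2_I_mul (a α μ x y : ℝ) :
    L1 a α x y (I * μ) + L2 a α x y (I * μ) =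
      I * ((α * Real.exp (-(μ * |x + a|)) * (α * Real.exp (-(μ * (2 * a + |y - a|))) -
        (2 * μ + α) * Real.exp (-(μ * |y + a|))) : ℝ) : ℂ) := by
  have h2a : 2 * I * (I * μ) * a = I * (I * μ) * ((2 * a : ℝ) : ℂ) := by push_cast; ring
  rw [L1, L2, h2a, exp_I_mul_I_mul_ofReal, exp_I_mul_I_mul_ofReal, exp_I_mul_I_mul_ofReal,
    exp_I_mul_I_mul_ofReal, show -(μ * (2 * a + |y - a|)) = -(μ * (2 * a)) + -(μ * |y - a|) by ring,
    Real.exp_add]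
  push_cast
  ring_nf

lemma norm_L1_add_L2_I_mul_le {a α μ : ℝ} (ha : 0 ≤ a) (hα : 0 ≤ α) (hμ : 0 ≤ μ) (x y : ℝ) :
    ‖L1 a α x y (I * μ) + L2 a α x y (I * μ)‖ ≤
      α * (2 * μ + 4 * a * α * μ) * Real.exp (-(μ * |x - y|)) := by
  have hshift : |(|y + a| - |y - a|)| ≤ 2 * a :=
    (abs_abs_sub_abs_le_abs_sub _ _).trans_eq
      (by rw [show y + a - (y - a) = 2 * a by ring, abs_of_nonneg (by linarith)])
  have hcancel := abs_mul_exp_sub_mul_exp_le (s := 2 * a + |y - a|) (t := |y + a|) (d := 4 * a)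
    hα hμ (by linarith [(abs_le.1 hshift).2]) (by linarith [(abs_le.1 hshift).1])
  have htri : |x - y| ≤ |x + a| + |y + a| := by
    simpa using abs_sub (x + a) (y + a)
  rw [L1_add_L2_I_mul, norm_mul, norm_I, one_mul, norm_real, Real.norm_eq_abs, abs_mul, abs_mul,
    abs_of_nonneg hα, abs_of_pos (Real.exp_pos _)]
  calc α * Real.exp (-(μ * |x + a|)) * |α * Real.exp (-(μ * (2 * a + |y - a|))) -
        (2 * μ + α) * Real.exp (-(μ * |y + a|))|
      ≤ α * Real.exp (-(μ * |x + a|)) *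
          ((2 * μ + α * μ * (4 * a)) * Real.exp (-(μ * |y + a|))) := by
        gcongr
    _ = α * (2 * μ + 4 * a * α * μ) * Real.exp (-(μ * (|x + a| + |y + a|))) := by
        rw [show -(μ * (|x + a| + |y + a|)) = -(μ * |x + a|) + -(μ * |y + a|) by ring,
          Real.exp_add]
        ring
    _ ≤ α * (2 * μ + 4 * a * α * μ) * Real.exp (-(μ * |x - y|)) := by
        gcongr

lemma norm_fker_I_mul_le {a α μ : ℝ} (ha : 0 ≤ a) (hα : 0 ≤ α) (hμ : 0 ≤ μ) (x y : ℝ) :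
    ‖fker a α x y (I * μ)‖ ≤ 2 * (α * (2 * μ + 4 * a * α * μ)) * Real.exp (-(μ * |x - y|)) := by
  have hreflect := norm_L1_add_L2_I_mul_le ha hα hμ (-x) (-y)
  rw [show -x - -y = -(x - y) by ring, abs_neg] at hreflect
  calc ‖fker a α x y (I * μ)‖
      = ‖(L1 a α x y (I * μ) + L2 a α x y (I * μ)) +
          (L1 a α (-x) (-y) (I * μ) + L2 a α (-x) (-y) (I * μ))‖ := by
        rw [fker]; ring_nf
    _ ≤ _ := (norm_add_le _ _).trans (by linarith [norm_L1_add_L2_I_mul_le ha hα hμ x y])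

lemma Dden_I_mul (a α μ : ℝ) :
    Dden a α (I * μ) = ((α ^ 2 * Real.exp (-(μ * (4 * a))) - (2 * μ + α) ^ 2 : ℝ) : ℂ) := by
  have h4a : 4 * I * (I * μ) * a = I * (I * μ) * ((4 * a : ℝ) : ℂ) := by push_cast; ring
  rw [Dden, h4a, exp_I_mul_I_mul_ofReal]
  push_cast
  ring_nf
  rw [I_sq]
  ring

lemma le_norm_Dden_I_mul {a α μ : ℝ} (ha : 0 ≤ a) (hα : 0 ≤ α) (hμ : 0 ≤ μ) :
    4 * μ * α ≤ ‖Dden a α (I * μ)‖ := by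
  have hexp : Real.exp (-(μ * (4 * a))) ≤ 1 := Real.exp_le_one_iff.2 (by nlinarith)
  rw [Dden_I_mul, norm_real, Real.norm_eq_abs, abs_sub_comm, abs_of_nonneg (by nlinarith)]
  nlinarith

lemma norm_K0_I_mul {μ : ℝ} (hμ : 0 < μ) (x y : ℝ) :
    ‖K0 x y (I * μ)‖ = Real.exp (-(μ * |x - y|)) / (2 * μ) := by
  rw [K0, exp_I_mul_I_mul_ofReal, norm_mul, norm_div, norm_real, Real.norm_eq_abs,
    abs_of_pos (Real.exp_pos _), norm_I, norm_mul, norm_mul, norm_I, norm_real, Real.norm_eq_abs,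
    abs_of_pos hμ, Complex.norm_two]
  ring

lemma norm_Kker_I_mul_le {a α μ : ℝ} (ha : 0 ≤ a) (hα : 0 < α) (hμ : 0 < μ) (x y : ℝ) :
    ‖Kker a α x y (I * μ)‖ ≤ (1 + a * α) / μ * Real.exp (-(μ * |x - y|)) := by
  have hden : 2 * μ * (4 * μ * α) ≤ ‖2 * (I * μ) * Dden a α (I * μ)‖ := by
    rw [norm_mul, norm_mul, norm_mul, norm_I, norm_real, Real.norm_eq_abs, abs_of_pos hμ,
      Complex.norm_two, one_mul]
    gcongr
    exact le_norm_Dden_I_mul ha hα.le hμ.le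
  calc ‖Kker a α x y (I * μ)‖
      ≤ ‖K0 x y (I * μ)‖ + ‖fker a α x y (I * μ)‖ / ‖2 * (I * μ) * Dden a α (I * μ)‖ := by
        rw [Kker, ← norm_div]
        exact norm_sub_le _ _
    _ ≤ Real.exp (-(μ * |x - y|)) / (2 * μ) +
          2 * (α * (2 * μ + 4 * a * α * μ)) * Real.exp (-(μ * |x - y|)) /
            (2 * μ * (4 * μ * α)) := by
        rw [norm_K0_I_mul hμ]
        gcongr
        exact norm_fker_I_mul_le ha hα.le hμ.le x y
    _ = (1 + a * α) / μ * Real.exp (-(μ * |x - y|)) := by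
        field_simp
        ring

lemma enorm_sq_mul_integral_Kker_le {a α lam : ℝ} (ha : 0 ≤ a) (hα : 0 < α) (hlam : 0 < lam)
    (u : ℝ → ℂ) (x : ℝ) :
    ‖(lam : ℂ) ^ 2 * ∫ y, Kker a α x y (I * lam) * u y‖ₑ ≤
      ((fun y => ‖u y‖ₑ) ⋆ₗ
        fun z => ENNReal.ofReal ((1 + a * α) * (lam * Real.exp (-(lam * |z|))))) x := by
  have hkernel : ∀ y, ‖(lam : ℂ) ^ 2 * Kker a α x y (I * lam)‖ₑ ≤
      ENNReal.ofReal ((1 + a * α) * (lam * Real.exp (-(lam * |x - y|)))) := fun y => by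
    rw [← ofReal_norm, norm_mul, norm_pow, norm_real, Real.norm_eq_abs, abs_of_pos hlam]
    refine ENNReal.ofReal_le_ofReal ?_
    calc lam ^ 2 * ‖Kker a α x y (I * lam)‖
        ≤ lam ^ 2 * ((1 + a * α) / lam * Real.exp (-(lam * |x - y|))) := by
          gcongr
          exact norm_Kker_I_mul_le ha hα hlam x y
      _ = (1 + a * α) * (lam * Real.exp (-(lam * |x - y|))) := by
          field_simp
  calc ‖(lam : ℂ) ^ 2 * ∫ y, Kker a α x y (I * lam) * u y‖ₑ
      ≤ ‖(lam : ℂ) ^ 2‖ₑ * ∫⁻ y, ‖Kker a α x y (I * lam) * u y‖ₑ := by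
        rw [enorm_mul]
        gcongr
        exact enorm_integral_le_lintegral_enorm _
    _ = ∫⁻ y, ‖u y‖ₑ * ‖(lam : ℂ) ^ 2 * Kker a α x y (I * lam)‖ₑ := by
        rw [← lintegral_const_mul' _ _ enorm_ne_top]
        congr 1 with y
        rw [enorm_mul, enorm_mul]
        ring
    _ ≤ _ := by
        rw [lconvolution_def]
        gcongr with y
        rw [neg_add_eq_sub]
        exact hkernel y

/-- for `a>0`, `α>0` and `p∈[2,∞]`, the operators
`(R_λ u)(x) = λ²·∫ K(x,y;iλ)u(y)dy` are bounded on `L^p(ℝ)` uniformly in `λ>0`. -/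
theorem stmt12 (a α : ℝ) (ha : 0 < a) (hα : 0 < α) (p : ℝ≥0∞) (hp : 2 ≤ p) :
    ∃ C > 0, ∀ lam : ℝ, 0 < lam → ∀ u : ℝ → ℂ, MemLp u p volume →
      eLpNorm (fun x : ℝ => (lam : ℂ) ^ 2 * ∫ y : ℝ, Kker a α x y (I * lam) * u y) p volume
        ≤ ENNReal.ofReal C * eLpNorm u p volume := by
  refine ⟨2 * (1 + a * α), by positivity, fun lam hlam u hu => ?_⟩
  set g : ℝ → ℝ≥0∞ := fun z => ENNReal.ofReal ((1 + a * α) * (lam * Real.exp (-(lam * |z|))))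
  have hg : Measurable g := by fun_prop
  have hmass : ∫⁻ z, g z ≤ ENNReal.ofReal (2 * (1 + a * α)) := by
    simp only [g, ENNReal.ofReal_mul (by positivity : (0 : ℝ) ≤ 1 + a * α)]
    rw [lintegral_const_mul _ (by fun_prop), mul_comm 2, ENNReal.ofReal_mul (by positivity),
      ENNReal.ofReal_ofNat]
    gcongr
    exact lintegral_exp_neg_mul_abs_le hlam
  calc _ ≤ (∫⁻ z, g z) * eLpNorm u p volume :=
        eLpNorm_le_of_enorm_le_lconvolution (one_le_two.trans hp) hu.1 hg
          (.of_forall (enorm_sq_mul_integral_Kker_le ha.le hα hlam u))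
    _ ≤ ENNReal.ofReal (2 * (1 + a * α)) * eLpNorm u p volume := by gcongr
end
end

section
/- Let a>0. (i) If α≥0 then there is no κ>0 with (2κ+α)² = α²·exp(−4κa). (ii) If α<0 then there is exactly one κ>0 satisfying 2κ+α = −α·exp(−2κa). (iii) If α<0 then a positive solution κ of 2κ+α = α·exp(−2κa) exists if and only if aα < −1, and in that case it is unique. Consequently, for α<0 the equation (2κ+α)² = α²·exp(−4κa) has exactly one positive solution when −1 ≤ aα < 0 and exactly two positive solutions when aα < −1. -/
/-!
Squaring splits the equation into the two secular equations `2κ + α = ± α e^{-2κa}`. For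
`α ≥ 0` neither has a positive root since `|α e^{-2κa}| ≤ α < 2κ + α`. For `α < 0` the
symmetric one reads `F κ = 0` with `F κ = 2κ + α + α e^{-2κa}` strictly increasing, negative
at `0` and positive at `-α`. The antisymmetric one reads `G κ = 0` with
`G κ = 2κ + α - α e^{-2κa}` strictly convex and `G 0 = 0`, so it has at most one positive root;
`G'(0) = 2(1 + aα)` decides whether there is one: if `aα ≥ -1` the tangent line at `0`
already keeps `G` positive on `κ > 0`, and if `aα < -1` then `G` dips below `0` and comes back
up, since `G κ ≥ 2κ + α`.
-/

open Real Set

/-- Positive zeros are the `κ` of the symmetric bound states `E = -κ²`. -/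
noncomputable def symmetricSecular (a α κ : ℝ) : ℝ := 2 * κ + α + α * exp (-2 * κ * a)

/-- Positive zeros are the `κ` of the antisymmetric bound states `E = -κ²`. -/
noncomputable def antisymmetricSecular (a α κ : ℝ) : ℝ := 2 * κ + α - α * exp (-2 * κ * a)

theorem StrictConvexOn.eq_of_map_eq_of_lt {s : Set ℝ} {f : ℝ → ℝ} (hf : StrictConvexOn ℝ s f)
    {x₀ x y : ℝ} (hx₀ : x₀ ∈ s) (hx : x ∈ s) (hy : y ∈ s) (hx₀x : x₀ < x) (hx₀y : x₀ < y)
    (hfx : f x = f x₀) (hfy : f y = f x₀) : x = y := by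
  have key : ∀ {u v}, v ∈ s → x₀ < u → u < v → f v = f x₀ → f u < f x₀ := fun hv hu huv hfv => by
    simpa [hfv] using hf.lt_on_openSegment hx₀ hv (hu.trans huv).ne
      (by rw [openSegment_eq_Ioo (hu.trans huv)]; exact ⟨hu, huv⟩)
  rcases lt_trichotomy x y with h | h | h
  · exact absurd hfx (key hy hx₀x h hfy).ne
  · exact h
  · exact absurd hfy (key hx hx₀y h hfx).ne

theorem exists_gt_lt_of_hasDerivAt_neg {f : ℝ → ℝ} {f' x : ℝ} (hf : HasDerivAt f f' x)
    (hf' : f' < 0) : ∃ y, x < y ∧ f y < f x := by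
  obtain ⟨y, hslope, hxy⟩ :=
    (hf.hasDerivWithinAt.liminf_right_slope_le hf').and_eventually self_mem_nhdsWithin |>.exists
  rw [slope_def_field, div_lt_iff₀ (sub_pos.2 hxy), zero_mul, sub_neg] at hslope
  exact ⟨y, hxy, hslope⟩

section

variable {a α : ℝ}

theorem sq_eq_sq_mul_exp_iff {κ : ℝ} :
    (2 * κ + α) ^ 2 = α ^ 2 * exp (-4 * κ * a) ↔
      2 * κ + α = α * exp (-2 * κ * a) ∨ 2 * κ + α = -α * exp (-2 * κ * a) := by
  rw [show α ^ 2 * exp (-4 * κ * a) = (α * exp (-2 * κ * a)) ^ 2 by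
    rw [mul_pow, sq (exp _), ← exp_add]; congr 2; ring, sq_eq_sq_iff_eq_or_eq_neg, ← neg_mul]

theorem setOf_pos_sq_eq_mul_exp :
    {κ : ℝ | 0 < κ ∧ (2 * κ + α) ^ 2 = α ^ 2 * exp (-4 * κ * a)} =
      {κ | 0 < κ ∧ 2 * κ + α = α * exp (-2 * κ * a)} ∪
        {κ | 0 < κ ∧ 2 * κ + α = -α * exp (-2 * κ * a)} := by
  ext κ
  simp only [mem_ofPred_eq, mem_union, sq_eq_sq_mul_exp_iff, and_or_left]

theorem not_exists_pos_sq_eq_of_nonneg (ha : 0 ≤ a) (hα : 0 ≤ α) :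
    ¬∃ κ : ℝ, 0 < κ ∧ (2 * κ + α) ^ 2 = α ^ 2 * exp (-4 * κ * a) := by
  rintro ⟨κ, hκ, h⟩
  have : exp (-4 * κ * a) ≤ 1 := exp_le_one_iff.2 (by nlinarith)
  nlinarith [mul_le_mul_of_nonneg_left this (sq_nonneg α)]

theorem strictMono_symmetricSecular (ha : 0 ≤ a) (hα : α ≤ 0) :
    StrictMono (symmetricSecular a α) := by
  refine StrictMono.add_monotone (fun x y hxy => by linarith) fun x y hxy => ?_
  exact mul_le_mul_of_nonpos_left (exp_le_exp.2 (by nlinarith)) hα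

theorem existsUnique_pos_symmetric (ha : 0 < a) (hα : α < 0) :
    ∃! κ : ℝ, 0 < κ ∧ 2 * κ + α = -α * exp (-2 * κ * a) := by
  have hzero (κ : ℝ) : symmetricSecular a α κ = 0 ↔ 2 * κ + α = -α * exp (-2 * κ * a) := by
    rw [symmetricSecular, add_eq_zero_iff_eq_neg, ← neg_mul]
  have hF0 : symmetricSecular a α 0 < 0 := by simp [symmetricSecular]; linarith
  have hFα : 0 < symmetricSecular a α (-α) := by
    have : exp (-2 * -α * a) < 1 := exp_lt_one_iff.2 (by nlinarith)
    simp only [symmetricSecular]; nlinarith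
  obtain ⟨κ, hκ, hFκ⟩ := intermediate_value_Ioo (by linarith)
    (by unfold symmetricSecular; fun_prop : Continuous (symmetricSecular a α)).continuousOn
    ⟨hF0, hFα⟩
  refine ⟨κ, ⟨hκ.1, (hzero κ).1 hFκ⟩, fun y ⟨_, hy⟩ => ?_⟩
  exact (strictMono_symmetricSecular ha.le hα.le).injective (((hzero y).2 hy).trans hFκ.symm)

theorem antisymmetricSecular_zero : antisymmetricSecular a α 0 = 0 := by
  simp [antisymmetricSecular]

theorem strictConvexOn_antisymmetricSecular (ha : a ≠ 0) (hα : α < 0) :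
    StrictConvexOn ℝ univ (antisymmetricSecular a α) := by
  refine ⟨convex_univ, fun x _ y _ hxy s t hs ht hst => ?_⟩
  have hexp := strictConvexOn_exp.2 (mem_univ (-2 * x * a)) (mem_univ (-2 * y * a))
    (by intro h; apply hxy; simpa [ha] using h) hs ht hst
  simp only [smul_eq_mul, antisymmetricSecular] at hexp ⊢
  rw [show -2 * (s * x + t * y) * a = s * (-2 * x * a) + t * (-2 * y * a) by ring]
  nlinarith [mul_lt_mul_of_pos_left hexp (neg_pos.2 hα)]

theorem antisymmetricSecular_pos_of_neg_one_le (ha : 0 < a) (hα : α < 0) (h : -1 ≤ a * α)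
    {κ : ℝ} (hκ : 0 < κ) : 0 < antisymmetricSecular a α κ := by
  have htangent : -2 * κ * a + 1 < exp (-2 * κ * a) := add_one_lt_exp (by positivity)
  simp only [antisymmetricSecular]
  nlinarith [mul_lt_mul_of_pos_left htangent (neg_pos.2 hα)]

theorem hasDerivAt_antisymmetricSecular (κ : ℝ) :
    HasDerivAt (antisymmetricSecular a α) (2 + 2 * a * α * exp (-2 * κ * a)) κ := by
  have hlin : HasDerivAt (fun κ : ℝ => -2 * κ * a) (-2 * a) κ := by
    simpa using ((hasDerivAt_id κ).const_mul (-2 : ℝ)).mul_const a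
  unfold antisymmetricSecular
  exact ((((hasDerivAt_id κ).const_mul 2).add_const α).sub (hlin.exp.const_mul α)).congr_deriv
    (by ring)

theorem exists_pos_antisymmetricSecular_neg (h : a * α < -1) :
    ∃ κ, 0 < κ ∧ antisymmetricSecular a α κ < 0 := by
  simpa [antisymmetricSecular_zero] using exists_gt_lt_of_hasDerivAt_neg
    (hasDerivAt_antisymmetricSecular (a := a) (α := α) 0) (by simp; linarith)

theorem existsUnique_pos_antisymmetric (ha : 0 < a) (h : a * α < -1) :
    ∃! κ : ℝ, 0 < κ ∧ 2 * κ + α = α * exp (-2 * κ * a) := by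
  have hα : α < 0 := by nlinarith
  have hzero (κ : ℝ) : antisymmetricSecular a α κ = 0 ↔ 2 * κ + α = α * exp (-2 * κ * a) :=
    sub_eq_zero
  obtain ⟨κ₀, hκ₀, hGκ₀⟩ := exists_pos_antisymmetricSecular_neg h
  have hGα : 0 < antisymmetricSecular a α (-α / 2) := by
    simp only [antisymmetricSecular]; nlinarith [exp_pos (-2 * (-α / 2) * a)]
  have hκ₀α : κ₀ ≤ -α / 2 := by
    simp only [antisymmetricSecular] at hGκ₀; nlinarith [exp_pos (-2 * κ₀ * a)]
  obtain ⟨κ, hκ, hGκ⟩ := intermediate_value_Ioo hκ₀α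
    (by unfold antisymmetricSecular; fun_prop : Continuous (antisymmetricSecular a α)).continuousOn
    ⟨hGκ₀, hGα⟩
  refine ⟨κ, ⟨hκ₀.trans hκ.1, (hzero κ).1 hGκ⟩, fun y ⟨hy, hyeq⟩ => ?_⟩
  exact (strictConvexOn_antisymmetricSecular ha.ne' hα).eq_of_map_eq_of_lt (mem_univ 0)
    (mem_univ y) (mem_univ κ) hy (hκ₀.trans hκ.1)
    (((hzero y).2 hyeq).trans antisymmetricSecular_zero.symm)
    (hGκ.trans antisymmetricSecular_zero.symm)

theorem not_exists_pos_antisymmetric (ha : 0 < a) (hα : α < 0) (h : -1 ≤ a * α) :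
    ¬∃ κ : ℝ, 0 < κ ∧ 2 * κ + α = α * exp (-2 * κ * a) := fun ⟨_, hκ, hκeq⟩ =>
  (antisymmetricSecular_pos_of_neg_one_le ha hα h hκ).ne' (sub_eq_zero.2 hκeq)

end

/-- let `a>0`.
(i) if `α≥0` there is no `κ>0` with `(2κ+α)² = α²e^{−4κa}`;
(ii) if `α<0` there is exactly one `κ>0` with `2κ+α = −α·e^{−2κa}`;
(iii) if `α<0`, a positive solution of `2κ+α = α·e^{−2κa}` exists iff `aα<−1`, and then it
is unique.  Consequently, for `α<0` the equation `(2κ+α)² = α²e^{−4κa}` has exactly one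
positive solution when `−1 ≤ aα < 0` and exactly two when `aα < −1`. -/
theorem stmt14 (a : ℝ) (ha : 0 < a) (α : ℝ) :
    (0 ≤ α → ¬∃ κ : ℝ, 0 < κ ∧ (2 * κ + α) ^ 2 = α ^ 2 * Real.exp (-4 * κ * a)) ∧
    (α < 0 → ∃! κ : ℝ, 0 < κ ∧ 2 * κ + α = -α * Real.exp (-2 * κ * a)) ∧
    (α < 0 → ((∃ κ : ℝ, 0 < κ ∧ 2 * κ + α = α * Real.exp (-2 * κ * a)) ↔ a * α < -1)) ∧
    (α < 0 → a * α < -1 → ∃! κ : ℝ, 0 < κ ∧ 2 * κ + α = α * Real.exp (-2 * κ * a)) ∧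
    (α < 0 → -1 ≤ a * α →
      {κ : ℝ | 0 < κ ∧ (2 * κ + α) ^ 2 = α ^ 2 * Real.exp (-4 * κ * a)}.ncard = 1) ∧
    (α < 0 → a * α < -1 →
      {κ : ℝ | 0 < κ ∧ (2 * κ + α) ^ 2 = α ^ 2 * Real.exp (-4 * κ * a)}.ncard = 2) := by
  have hsplit := setOf_pos_sq_eq_mul_exp (a := a) (α := α)
  set A := {κ : ℝ | 0 < κ ∧ 2 * κ + α = α * exp (-2 * κ * a)}
  set B := {κ : ℝ | 0 < κ ∧ 2 * κ + α = -α * exp (-2 * κ * a)}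
  refine ⟨not_exists_pos_sq_eq_of_nonneg ha.le, existsUnique_pos_symmetric ha,
    fun hα => ⟨fun hex => lt_of_not_ge fun h => not_exists_pos_antisymmetric ha hα h hex,
      fun h => (existsUnique_pos_antisymmetric ha h).exists⟩,
    fun _ => existsUnique_pos_antisymmetric ha, fun hα h => ?_, fun hα h => ?_⟩
  · have hA : A = ∅ := eq_empty_of_forall_notMem fun κ hκ =>
      not_exists_pos_antisymmetric ha hα h ⟨κ, hκ⟩
    rw [hsplit, hA, empty_union, ncard_eq_one, singleton_iff_unique_mem]
    exact existsUnique_pos_symmetric ha hα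
  · obtain ⟨κ₂, hA⟩ :=
      (singleton_iff_unique_mem (s := A)).2 (existsUnique_pos_antisymmetric ha h)
    obtain ⟨κ₁, hB⟩ := (singleton_iff_unique_mem (s := B)).2 (existsUnique_pos_symmetric ha hα)
    have hκ₂ : κ₂ ∈ A := hA ▸ mem_singleton κ₂
    have hκ₁ : κ₁ ∈ B := hB ▸ mem_singleton κ₁
    rw [hsplit, hA, hB, singleton_union, ncard_pair]
    rintro rfl
    nlinarith [hκ₁.2, hκ₂.2, mul_neg_of_neg_of_pos hα (exp_pos (-2 * κ₂ * a))]
end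

section
/- Let a>0 and α>0. There exists a constant C>0 such that for all λ>0 and all x,y∈ℝ: | K_1(x,y;iλ) + K_2(x,y;iλ) | ≤ C·λ^{−1}·exp(−λ|x+a|)·( exp(−λ|y+a|) + exp(−λ·| |y|−a |) ). -/
open Complex MeasureTheory Filter Topology
open scoped ENNReal

noncomputable section

lemma expIk (lam t : ℝ) : Complex.exp (I * (I * (lam:ℂ)) * (t:ℂ)) = ((Real.exp (-(lam*t)) : ℝ) : ℂ) := by
  rw [Complex.ofReal_exp]; congr 1; push_cast
  linear_combination ((lam:ℂ)*t) * Complex.I_sq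

lemma exp2Ik (lam t : ℝ) : Complex.exp (2 * I * (I * (lam:ℂ)) * (t:ℂ)) = ((Real.exp (-(2*lam*t)) : ℝ) : ℂ) := by
  rw [Complex.ofReal_exp]; congr 1; push_cast
  linear_combination (2*(lam:ℂ)*t) * Complex.I_sq

lemma exp4Ik (lam t : ℝ) : Complex.exp (4 * I * (I * (lam:ℂ)) * (t:ℂ)) = ((Real.exp (-(4*lam*t)) : ℝ) : ℂ) := by
  rw [Complex.ofReal_exp]; congr 1; push_cast
  linear_combination (4*(lam:ℂ)*t) * Complex.I_sq

lemma num_eq (a α x y lam : ℝ) :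
    L1 a α x y (I * lam) + L2 a α x y (I * lam)
      = I * (((α^2 * Real.exp (-(2*lam*a)) * Real.exp (-(lam*|y-a|))
          - α*(2*lam+α) * Real.exp (-(lam*|y+a|))) * Real.exp (-(lam*|x+a|)) : ℝ) : ℂ) := by
  unfold L1 L2
  rw [expIk lam |x+a|, expIk lam |y+a|, expIk lam |y-a|, exp2Ik lam a]
  push_cast
  ring

lemma den_eq (a α lam : ℝ) :
    2 * (I * (lam:ℂ)) * Dden a α (I * lam)
      = I * (((2*lam) * (α^2 * Real.exp (-(4*lam*a)) - (2*lam+α)^2) : ℝ) : ℂ) := by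
  unfold Dden
  rw [exp4Ik lam a]
  push_cast
  linear_combination (2*I*(lam:ℂ)*(2*(lam:ℂ)+α)^2) * Complex.I_sq

lemma exp_diff_le (u v : ℝ) (h : u ≤ v) :
    Real.exp (-u) - Real.exp (-v) ≤ (v - u) * Real.exp (-u) := by
  have h1 : (u - v) + 1 ≤ Real.exp (u - v) := Real.add_one_le_exp _
  have h2 : Real.exp (-u) * Real.exp (u - v) = Real.exp (-v) := by
    rw [← Real.exp_add]; ring_nf
  nlinarith [Real.exp_pos (-u)]

lemma exp_abs_diff (u v : ℝ) :
    |Real.exp (-u) - Real.exp (-v)| ≤ |u - v| * (Real.exp (-u) + Real.exp (-v)) := by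
  rcases le_total u v with h | h
  · rw [_root_.abs_of_nonneg (by have := Real.exp_le_exp.2 (neg_le_neg h); linarith),
      _root_.abs_of_nonpos (by linarith : u - v ≤ 0)]
    have := exp_diff_le u v h
    nlinarith [Real.exp_pos (-v)]
  · rw [_root_.abs_of_nonpos (by have := Real.exp_le_exp.2 (neg_le_neg h); linarith),
      _root_.abs_of_nonneg (by linarith : (0:ℝ) ≤ u - v)]
    have := exp_diff_le v u h
    nlinarith [Real.exp_pos (-u)]

lemma real_bound (a α lam y : ℝ) (ha : 0 < a) (hα : 0 < α) (hl : 0 < lam) :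
    |α^2 * Real.exp (-(2*lam*a)) * Real.exp (-(lam*|y-a|)) - α*(2*lam+α)*Real.exp (-(lam*|y+a|))|
      ≤ lam*(4*a*α^2+2*α) * (Real.exp (-(lam*|y+a|)) + Real.exp (-(lam*|(|y| - a)|))) := by
  set u := lam*(2*a+|y-a|) with hu
  set v := lam*|y+a| with hv
  have hcomb : α^2 * Real.exp (-(2*lam*a)) * Real.exp (-(lam*|y-a|)) = α^2 * Real.exp (-u) := by
    rw [mul_assoc, ← Real.exp_add]; congr 2; rw [hu]; ring
  rw [hcomb]
  set Eu := Real.exp (-u) with hEu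
  set Ev := Real.exp (-v) with hEv
  set Eb := Real.exp (-(lam*|(|y| - a)|)) with hEb
  have tri : ∀ p q : ℝ, |p - q| ≤ |p| + |q| := fun p q => by
    rw [sub_eq_add_neg]; exact (abs_add_le _ _).trans (by rw [abs_neg])
  have habs_diff : |Eu - Ev| ≤ |u - v| * (Eu + Ev) := exp_abs_diff u v
  have huv : |u - v| ≤ lam * (4*a) := by
    have h1 : |(|y - a|) - (|y + a|)| ≤ |(y - a) - (y + a)| := abs_abs_sub_abs_le_abs_sub _ _
    have h2 : |(y - a) - (y + a)| = 2*a := by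
      rw [show (y-a)-(y+a) = -(2*a) by ring, abs_neg, _root_.abs_of_pos (by linarith)]
    rw [h2] at h1
    have h3 := abs_le.1 h1
    rw [hu, hv, _root_.abs_of_nonneg (by nlinarith [h3.1] : (0:ℝ) ≤ lam*(2*a+|y-a|) - lam*|y+a|)]
    nlinarith [h3.2]
  have hub : Eu ≤ Eb := by
    rw [hEu, hEb]
    apply Real.exp_le_exp.2
    apply neg_le_neg
    apply mul_le_mul_of_nonneg_left _ hl.le
    rcases le_total 0 y with hy | hy
    · rw [_root_.abs_of_nonneg hy]
      have : |y - a| ≤ 2*a + |y - a| := by linarith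
      exact this
    · rw [_root_.abs_of_nonpos hy, show -y - a = -(y+a) by ring, abs_neg]
      have h4 : |y + a| = |(y - a) + 2*a| := by ring_nf
      rw [h4]
      have := abs_add_le (y - a) (2*a)
      rw [_root_.abs_of_pos (by linarith : (0:ℝ) < 2*a)] at this
      linarith
  have s0 : |α^2*Eu - α*(2*lam+α)*Ev| ≤ α^2*|Eu - Ev| + 2*lam*α*Ev := by
    have hsplit : α^2*Eu - α*(2*lam+α)*Ev = α^2*(Eu - Ev) - 2*lam*α*Ev := by ring
    rw [hsplit]
    refine (tri _ _).trans ?_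
    have e1 : |α^2*(Eu - Ev)| = α^2*|Eu - Ev| := by
      rw [abs_mul, _root_.abs_of_nonneg (by positivity : (0:ℝ) ≤ α^2)]
    have e2 : |2*lam*α*Ev| = 2*lam*α*Ev := _root_.abs_of_nonneg (by positivity)
    linarith [e1.le, e2.le]
  have s1 : α^2*|Eu - Ev| ≤ α^2*((lam*(4*a))*(Eu + Ev)) := by
    apply mul_le_mul_of_nonneg_left _ (by positivity : (0:ℝ) ≤ α^2)
    exact habs_diff.trans (mul_le_mul_of_nonneg_right huv (by positivity))
  have hEvpos : 0 < Ev := Real.exp_pos _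
  have hEbpos : 0 < Eb := Real.exp_pos _
  nlinarith [s0, s1, hub, mul_pos hl hα, mul_pos (mul_pos hl hα) hEbpos,
    mul_nonneg (mul_nonneg hl.le ha.le) (sub_nonneg.2 hub : (0:ℝ) ≤ Eb - Eu)]

/-- for `a>0`, `α>0` there is `C>0` such that for all `λ>0` and `x,y∈ℝ`,
`|K₁(x,y;iλ)+K₂(x,y;iλ)| ≤ C·λ⁻¹·e^{−λ|x+a|}(e^{−λ|y+a|}+e^{−λ||y|−a|})`, where
`K_j(x,y;iλ) = −L_j(x,y;iλ)/(2iλ·D(iλ))` for `j=1,2`. -/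
theorem stmt15 (a α : ℝ) (ha : 0 < a) (hα : 0 < α) :
    ∃ C > 0, ∀ lam : ℝ, 0 < lam → ∀ x y : ℝ,
      ‖-(L1 a α x y (I * lam) + L2 a α x y (I * lam)) / (2 * (I * lam) * Dden a α (I * lam))‖
        ≤ C * lam⁻¹ * Real.exp (-lam * |x + a|) *
            (Real.exp (-lam * |y + a|) + Real.exp (-lam * |(|y| - a)|)) := by
  refine ⟨(4*a*α^2+2*α)/(8*α), by positivity, ?_⟩
  intro lam hl x y
  simp only [neg_mul]
  rw [norm_div, norm_neg, num_eq, den_eq]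
  rw [norm_mul, norm_mul, Complex.norm_I, one_mul, one_mul, Complex.norm_real,
    Complex.norm_real, Real.norm_eq_abs, Real.norm_eq_abs]
  set d := (2*lam+α)^2 - α^2 * Real.exp (-(4*lam*a)) with hd
  have he1 : Real.exp (-(4*lam*a)) ≤ 1 := by
    rw [← Real.exp_zero]
    exact Real.exp_le_exp.2 (by nlinarith)
  have hd4 : 4*lam*α ≤ d := by
    rw [hd]; nlinarith [sq_nonneg α, sq_nonneg lam]
  have hdpos : 0 < d := lt_of_lt_of_le (by positivity) hd4
  have hden : |(2*lam) * (α^2 * Real.exp (-(4*lam*a)) - (2*lam+α)^2)| = 2*lam*d := by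
    rw [show (2*lam) * (α^2 * Real.exp (-(4*lam*a)) - (2*lam+α)^2) = -((2*lam)*d) by rw [hd]; ring,
      abs_neg, _root_.abs_of_nonneg (by positivity)]
  rw [hden]
  rw [abs_mul, _root_.abs_of_nonneg (Real.exp_nonneg (-(lam*|x+a|)))]
  have hnum := real_bound a α lam y ha hα hl
  have hstep : |α^2 * Real.exp (-(2*lam*a)) * Real.exp (-(lam*|y-a|))
        - α*(2*lam+α) * Real.exp (-(lam*|y+a|))| * Real.exp (-(lam*|x+a|))
      ≤ (lam*(4*a*α^2+2*α) * (Real.exp (-(lam*|y+a|)) + Real.exp (-(lam*|(|y| - a)|))))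
        * Real.exp (-(lam*|x+a|)) :=
    mul_le_mul_of_nonneg_right hnum (Real.exp_nonneg _)
  refine (div_le_div₀ (by positivity) hstep (by positivity : (0:ℝ) < 2*lam*(4*lam*α))
    (by nlinarith : 2*lam*(4*lam*α) ≤ 2*lam*d)).trans_eq ?_
  field_simp
  ring
end
end

section
/- Let z∈ℂ with Re z ≥ 0 and z≠0, and let R>0. Then the improper integral ∫_R^{∞} exp(−zk²)·k^{−1} dk (understood as lim_{S→∞}∫_R^S) converges, and | ∫_R^{∞} exp(−zk²)·k^{−1} dk | ≤ exp(−(Re z)·R²) / ( |z|·R² ). -/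
/-!
With `F k = -exp(-z k²) / (2 z k²)` one has `F' k = exp(-z k²) / k + exp(-z k²) / (z k³)`, so
`∫_R^S exp(-z k²) / k = F S - F R - ∫_R^S exp(-z k²) / (z k³)`. Since `Re z ≥ 0`, `F S → 0`, and
the remaining integrand is absolutely integrable on `(R, ∞)` with bound `exp(-Re z R²) / (|z| k³)`.
Both `|F R|` and the tail integral are then at most `exp(-Re z R²) / (2 |z| R²)`.
-/

open Complex MeasureTheory Filter Topology Set

namespace ExpSqTail

noncomputable def primitive (z : ℂ) (k : ℝ) : ℂ :=
  -cexp (-z * (k : ℂ) ^ 2) / (2 * z * (k : ℂ) ^ 2)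

noncomputable def correction (z : ℂ) (k : ℝ) : ℂ :=
  cexp (-z * (k : ℂ) ^ 2) / (z * (k : ℂ) ^ 3)

variable {z : ℂ}

theorem norm_cexp_neg_mul_sq (z : ℂ) (k : ℝ) :
    ‖cexp (-z * (k : ℂ) ^ 2)‖ = Real.exp (-z.re * k ^ 2) := by
  rw [Complex.norm_exp, ← ofReal_pow, mul_comm, re_ofReal_mul, neg_re, mul_comm]

theorem exp_neg_re_mul_sq_le (hz : 0 ≤ z.re) {R k : ℝ} (hR : 0 ≤ R) (hk : R ≤ k) :
    Real.exp (-z.re * k ^ 2) ≤ Real.exp (-z.re * R ^ 2) := by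
  have := mul_le_mul_of_nonneg_left (pow_le_pow_left₀ hR hk 2) hz
  exact Real.exp_le_exp.mpr (by linarith)

theorem norm_primitive (z : ℂ) (k : ℝ) :
    ‖primitive z k‖ = Real.exp (-z.re * k ^ 2) / (2 * ‖z‖ * k ^ 2) := by
  rw [primitive, norm_div, norm_neg, norm_cexp_neg_mul_sq]
  simp

theorem norm_correction (z : ℂ) (k : ℝ) :
    ‖correction z k‖ = Real.exp (-z.re * k ^ 2) / (‖z‖ * |k| ^ 3) := by
  rw [correction, norm_div, norm_cexp_neg_mul_sq]
  simp

theorem hasDerivAt_primitive (hz0 : z ≠ 0) {k : ℝ} (hk : k ≠ 0) :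
    HasDerivAt (primitive z) (cexp (-z * (k : ℂ) ^ 2) * (k : ℂ)⁻¹ + correction z k) k := by
  have hk' : (k : ℂ) ≠ 0 := ofReal_ne_zero.mpr hk
  have hsq : HasDerivAt (fun w : ℂ => w ^ 2) (2 * k) (k : ℂ) := by
    simpa using hasDerivAt_pow 2 (k : ℂ)
  have hF : HasDerivAt (fun w : ℂ => -cexp (-z * w ^ 2) / (2 * z * w ^ 2))
      (cexp (-z * (k : ℂ) ^ 2) * (k : ℂ)⁻¹ + correction z k) (k : ℂ) := by
    refine ((hsq.const_mul (-z)).cexp.neg.div (hsq.const_mul (2 * z))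
      (by simp [hz0, hk'])).congr_deriv ?_
    simp only [correction, Pi.neg_apply]
    field_simp
    ring
  exact hF.comp_ofReal

theorem continuousOn_correction (hz0 : z ≠ 0) : ContinuousOn (correction z) (Ioi 0) := by
  intro k (hk : 0 < k)
  apply ContinuousAt.continuousWithinAt
  unfold correction
  fun_prop (disch := simp [hz0, hk.ne'])

theorem continuousOn_cexp_neg_mul_sq_div :
    ContinuousOn (fun k : ℝ => cexp (-z * (k : ℂ) ^ 2) * (k : ℂ)⁻¹) (Ioi 0) := by
  intro k (hk : 0 < k)
  apply ContinuousAt.continuousWithinAt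
  fun_prop (disch := simp [hk.ne'])

theorem tendsto_primitive_atTop (hz : 0 ≤ z.re) : Tendsto (primitive z) atTop (𝓝 0) := by
  have hbound : ∀ S : ℝ, ‖primitive z S‖ ≤ (2 * ‖z‖)⁻¹ * (S ^ 2)⁻¹ := fun S => by
    rw [norm_primitive, div_eq_mul_inv, mul_inv]
    refine mul_le_of_le_one_left (by positivity) (Real.exp_le_one_iff.mpr ?_)
    nlinarith [sq_nonneg S]
  refine squeeze_zero_norm hbound ?_
  simpa using (tendsto_pow_atTop two_ne_zero).inv_tendsto_atTop.const_mul (2 * ‖z‖)⁻¹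

theorem norm_correction_le (hz : 0 ≤ z.re) {R k : ℝ} (hR : 0 < R) (hk : R ≤ k) :
    ‖correction z k‖ ≤ Real.exp (-z.re * R ^ 2) / ‖z‖ * k ^ (-3 : ℝ) := by
  have hk₀ : 0 < k := hR.trans_le hk
  calc ‖correction z k‖ = Real.exp (-z.re * k ^ 2) / (‖z‖ * k ^ 3) := by
        rw [norm_correction, abs_of_pos hk₀]
    _ ≤ Real.exp (-z.re * R ^ 2) / (‖z‖ * k ^ 3) :=
        div_le_div_of_nonneg_right (exp_neg_re_mul_sq_le hz hR.le hk) (by positivity)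
    _ = Real.exp (-z.re * R ^ 2) / ‖z‖ * k ^ (-3 : ℝ) := by
        rw [Real.rpow_neg hk₀.le]
        norm_cast
        ring

theorem measurable_correction : Measurable (correction z) := by
  unfold correction
  fun_prop

theorem integrableOn_correction_Ioi (hz : 0 ≤ z.re) {R : ℝ} (hR : 0 < R) :
    IntegrableOn (correction z) (Ioi R) := by
  refine Integrable.mono'
    ((integrableOn_Ioi_rpow_of_lt (by norm_num : (-3 : ℝ) < -1) hR).const_mul
      (Real.exp (-z.re * R ^ 2) / ‖z‖))
    measurable_correction.aestronglyMeasurable ?_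
  filter_upwards [ae_restrict_mem measurableSet_Ioi] with k (hk : R < k)
  exact norm_correction_le hz hR hk.le

theorem norm_integral_correction_le (hz : 0 ≤ z.re) {R : ℝ} (hR : 0 < R) :
    ‖∫ k in Ioi R, correction z k‖ ≤ Real.exp (-z.re * R ^ 2) / (2 * ‖z‖ * R ^ 2) := by
  calc ‖∫ k in Ioi R, correction z k‖
      ≤ ∫ k in Ioi R, Real.exp (-z.re * R ^ 2) / ‖z‖ * k ^ (-3 : ℝ) := by
        refine norm_integral_le_of_norm_le
          ((integrableOn_Ioi_rpow_of_lt (by norm_num : (-3 : ℝ) < -1) hR).const_mul _) ?_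
        filter_upwards [ae_restrict_mem measurableSet_Ioi] with k (hk : R < k)
        exact norm_correction_le hz hR hk.le
    _ = Real.exp (-z.re * R ^ 2) / (2 * ‖z‖ * R ^ 2) := by
        rw [integral_const_mul, integral_Ioi_rpow_of_lt (by norm_num : (-3 : ℝ) < -1) hR,
          show (-3 : ℝ) + 1 = -2 by norm_num, Real.rpow_neg hR.le, Real.rpow_two]
        field_simp

theorem intervalIntegral_eq_primitive_sub (hz0 : z ≠ 0) {R S : ℝ} (hR : 0 < R) (hS : R ≤ S) :
    ∫ k in R..S, cexp (-z * (k : ℂ) ^ 2) * (k : ℂ)⁻¹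
      = primitive z S - primitive z R - ∫ k in R..S, correction z k := by
  have hpos : uIcc R S ⊆ Ioi 0 := by
    rw [uIcc_of_le hS]
    exact fun k hk => hR.trans_le hk.1
  have hf : IntervalIntegrable _ volume R S :=
    ((continuousOn_cexp_neg_mul_sq_div (z := z)).mono hpos).intervalIntegrable
  have hg : IntervalIntegrable _ volume R S :=
    ((continuousOn_correction hz0).mono hpos).intervalIntegrable
  have hFTC := intervalIntegral.integral_eq_sub_of_hasDerivAt
    (fun k hk => hasDerivAt_primitive hz0 (hpos hk).ne') (hf.add hg)
  rw [intervalIntegral.integral_add hf hg] at hFTC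
  linear_combination hFTC

end ExpSqTail

open ExpSqTail in
/-- for `z∈ℂ` with `Re z ≥ 0`, `z≠0`, and `R>0`, the improper integral
`∫_R^∞ exp(−zk²)·k⁻¹ dk = lim_{S→∞}∫_R^S` converges and is bounded in absolute value by
`exp(−(Re z)R²)/(|z|R²)`. -/
theorem stmt18 (z : ℂ) (hz : 0 ≤ z.re) (hz0 : z ≠ 0) (R : ℝ) (hR : 0 < R) :
    ∃ A : ℂ,
      Tendsto (fun S : ℝ => ∫ k in R..S, Complex.exp (-z * (k : ℂ) ^ 2) * (k : ℂ)⁻¹)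
        atTop (𝓝 A) ∧
      ‖A‖ ≤ Real.exp (-z.re * R ^ 2) / (‖z‖ * R ^ 2) := by
  refine ⟨-primitive z R - ∫ k in Ioi R, correction z k, ?_, ?_⟩
  · have hlim := ((tendsto_primitive_atTop hz).sub_const (primitive z R)).sub
      (intervalIntegral_tendsto_integral_Ioi R (integrableOn_correction_Ioi hz hR) tendsto_id)
    rw [zero_sub] at hlim
    refine hlim.congr' ?_
    filter_upwards [eventually_ge_atTop R] with S hS
    exact (intervalIntegral_eq_primitive_sub hz0 hR hS).symm
  · calc ‖-primitive z R - ∫ k in Ioi R, correction z k‖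
        ≤ ‖primitive z R‖ + ‖∫ k in Ioi R, correction z k‖ := by
          simpa using norm_sub_le (-primitive z R) (∫ k in Ioi R, correction z k)
      _ ≤ Real.exp (-z.re * R ^ 2) / (2 * ‖z‖ * R ^ 2)
          + Real.exp (-z.re * R ^ 2) / (2 * ‖z‖ * R ^ 2) :=
          add_le_add (norm_primitive z R).le (norm_integral_correction_le hz hR)
      _ = Real.exp (-z.re * R ^ 2) / (‖z‖ * R ^ 2) := by
          field_simp
          ring
end
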